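/- Let (λ_k, x_k, v_k) be generated by the fully implicit scheme with arbitrary step sizes α_k > 0: θ_k(λ_{k+1} − λ_k)/α_k = A v_{k+1} − b; (x_{k+1} − x_k)/α_k = v_{k+1} − x_{k+1}; and γ_k(v_{k+1} − v_k)/α_k = μ_β(x_{k+1} − v_{k+1}) − (ξ_{k+1} + Aᵀλ_{k+1}) for some ξ_{k+1} ∈ ∂f_β(x_{k+1}) + N_X(x_{k+1}), with x₀ ∈ X, v₀ ∈ ℝⁿ, and parameters θ_{k+1} = θ_k/(1+α_k), γ_{k+1} = (γ_k + μ_β α_k)/(1+α_k), θ₀ = 1, γ₀ > 0. Define the discrete Lyapunov function E_k = L_β(x_k, λ*) − L_β(x*, λ_k) + (γ_k/2)‖v_k − x*‖² + (θ_k/2)‖λ_k − λ*‖². Then x_k ∈ X for all k and E_{k+1} − E_k ≤ −α_k E_{k+1} for all k ∈ ℕ. -/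

import Mathlib

open scoped RealInnerProductSpace Pointwise

/-- The smallest singular value of a linear map between Euclidean spaces. -/
noncomputable def sigmaMin {n m : ℕ}
    (A : EuclideanSpace ℝ (Fin n) →L[ℝ] EuclideanSpace ℝ (Fin m)) : ℝ :=
  sInf {c : ℝ | ∃ x : EuclideanSpace ℝ (Fin n), ‖x‖ = 1 ∧ ‖A x‖ = c}

/-- The convex subdifferential. -/
def subdiff {n : ℕ} (f : EuclideanSpace ℝ (Fin n) → ℝ)
    (x : EuclideanSpace ℝ (Fin n)) : Set (EuclideanSpace ℝ (Fin n)) :=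
  {p | ∀ y, f x + ⟪p, y - x⟫ ≤ f y}

/-- The normal cone of `X` at `x` (empty if `x ∉ X`). -/
def normalCone {n : ℕ} (X : Set (EuclideanSpace ℝ (Fin n)))
    (x : EuclideanSpace ℝ (Fin n)) : Set (EuclideanSpace ℝ (Fin n)) :=
  {p | x ∈ X ∧ ∀ z ∈ X, ⟪p, z - x⟫ ≤ 0}

/-! Each step of the scheme is an implicit Euler step, so the three-point identity bounds the
changes of `(θ/2)‖λ - λ*‖²` and `(γ/2)‖v - x*‖²` by inner products with the new update
directions. The inclusion for `ξ_{k+1}` makes `ξ_{k+1} + Aᵀλ_{k+1}` a `μ_β`-strong subgradient of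
`L_β(·, λ_{k+1})` on `X`: `f` contributes `μ`, the penalty `β σ_min(A)²`. Testing that
subgradient at `x_k` and at `x*`, and writing `α v_{k+1} = (1 + α) x_{k+1} - x_k`, all
Lagrangian cross terms cancel because `L_β` is affine in `λ` and `L_β(x*, ·)` is constant. -/

open Filter Topology
open scoped InnerProduct

theorem nonpos_of_forall_le_mul {c B : ℝ} (h : ∀ t : ℝ, 0 < t → t ≤ 1 → c ≤ t * B) : c ≤ 0 := by
  have hlim : Tendsto (fun t : ℝ => t * B) (𝓝[>] 0) (𝓝 0) := by
    simpa using tendsto_nhdsWithin_of_tendsto_nhds ((continuous_mul_const B).tendsto 0)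
  exact ge_of_tendsto hlim (mem_of_superset (Ioc_mem_nhdsGT one_pos) fun t ht => h t ht.1 ht.2)

section StrongSubgradient

variable {E F : Type*} [NormedAddCommGroup E] [InnerProductSpace ℝ E]
  [NormedAddCommGroup F] [InnerProductSpace ℝ F]

def IsStrongSubgradientOn (φ : E → ℝ) (X : Set E) (μ : ℝ) (x g : E) : Prop :=
  ∀ y ∈ X, φ x + ⟪g, y - x⟫ + μ / 2 * ‖y - x‖ ^ 2 ≤ φ y

namespace IsStrongSubgradientOn

variable {φ ψ : E → ℝ} {X : Set E} {μ ν : ℝ} {x g h : E}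

theorem add (hg : IsStrongSubgradientOn φ X μ x g) (hh : IsStrongSubgradientOn ψ X ν x h) :
    IsStrongSubgradientOn (fun z => φ z + ψ z) X (μ + ν) x (g + h) := by
  intro y hy
  have := add_le_add (hg y hy) (hh y hy)
  rw [inner_add_left]
  linarith

theorem add_of_inner_nonpos (hg : IsStrongSubgradientOn φ X μ x g)
    {q : E} (hq : ∀ y ∈ X, ⟪q, y - x⟫ ≤ 0) : IsStrongSubgradientOn φ X μ x (g + q) := by
  intro y hy
  have := hg y hy
  have := hq y hy
  rw [inner_add_left]
  linarith

theorem add_inner_sub [CompleteSpace E] [CompleteSpace F]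
    (hg : IsStrongSubgradientOn φ X μ x g) (A : E →L[ℝ] F) (b l : F) :
    IsStrongSubgradientOn (fun z => φ z + ⟪l, A z - b⟫) X μ x (g + (A†) l) := by
  intro y hy
  have hlin : ⟪(A†) l, y - x⟫ = ⟪l, A y - b⟫ - ⟪l, A x - b⟫ := by
    rw [ContinuousLinearMap.adjoint_inner_left, ← inner_sub_right, map_sub,
      sub_sub_sub_cancel_right]
  have := hg y hy
  rw [inner_add_left, hlin]
  linarith

end IsStrongSubgradientOn

end StrongSubgradient

section ImplicitStep

variable {E : Type*} [NormedAddCommGroup E] [InnerProductSpace ℝ E]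

theorem norm_sub_sq_sub_norm_sub_sq_le (u v w : E) :
    ‖u - w‖ ^ 2 - ‖v - w‖ ^ 2 ≤ 2 * ⟪u - v, u - w⟫ := by
  have h := norm_sub_sq_real (u - w) (u - v)
  rw [sub_sub_sub_cancel_left, real_inner_comm] at h
  linarith [sq_nonneg ‖u - v‖]

theorem implicit_step_energy_le {c α : ℝ} {u u' w : E} (hc : 0 ≤ c) (hα : 0 < α)
    (hstep : (c / α) • (u' - u) = w) (z : E) :
    c / 2 * ‖u' - z‖ ^ 2 - c / 2 * ‖u - z‖ ^ 2 ≤ α * ⟪w, u' - z⟫ := by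
  have hw : α * ⟪w, u' - z⟫ = c * ⟪u' - u, u' - z⟫ := by
    rw [← hstep, real_inner_smul_left]
    field_simp
  have := mul_le_mul_of_nonneg_left (norm_sub_sq_sub_norm_sub_sq_le u' u z) hc
  linarith

end ImplicitStep

section Euclidean

variable {n m : ℕ} (A : EuclideanSpace ℝ (Fin n) →L[ℝ] EuclideanSpace ℝ (Fin m))

theorem sigmaMin_nonneg : 0 ≤ sigmaMin A :=
  Real.sInf_nonneg fun _ ⟨_, _, hc⟩ => hc ▸ norm_nonneg _

theorem sigmaMin_mul_norm_le (u : EuclideanSpace ℝ (Fin n)) : sigmaMin A * ‖u‖ ≤ ‖A u‖ := by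
  rcases eq_or_ne u 0 with rfl | hu
  · simp
  have hu : 0 < ‖u‖ := norm_pos_iff.mpr hu
  have hunit : ‖‖u‖⁻¹ • u‖ = 1 := by
    rw [norm_smul, norm_inv, norm_norm, inv_mul_cancel₀ hu.ne']
  have hle : sigmaMin A ≤ ‖A (‖u‖⁻¹ • u)‖ :=
    csInf_le ⟨0, fun _ ⟨_, _, hc⟩ => hc ▸ norm_nonneg _⟩ ⟨_, hunit, rfl⟩
  rwa [map_smul, norm_smul, norm_inv, norm_norm, le_inv_mul_iff₀ hu, mul_comm] at hle

theorem sigmaMin_sq_mul_sq_norm_le (u : EuclideanSpace ℝ (Fin n)) :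
    sigmaMin A ^ 2 * ‖u‖ ^ 2 ≤ ‖A u‖ ^ 2 := by
  rw [← mul_pow]
  exact pow_le_pow_left₀ (mul_nonneg (sigmaMin_nonneg A) (norm_nonneg u))
    (sigmaMin_mul_norm_le A u) 2

theorem penalty_add_smul (b : EuclideanSpace ℝ (Fin m)) (β t : ℝ) (x d : EuclideanSpace ℝ (Fin n)) :
    β / 2 * ‖A (x + t • d) - b‖ ^ 2 = β / 2 * ‖A x - b‖ ^ 2
      + t * ⟪β • (A†) (A x - b), d⟫ + t ^ 2 * (β / 2 * ‖A d‖ ^ 2) := by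
  have hsplit : A (x + t • d) - b = (A x - b) + t • A d := by
    rw [map_add, map_smul]; abel
  rw [hsplit, norm_add_sq_real, real_inner_smul_right, norm_smul, Real.norm_eq_abs, mul_pow, sq_abs,
    real_inner_smul_left, ContinuousLinearMap.adjoint_inner_left]
  ring

theorem isStrongSubgradientOn_penalty (X : Set (EuclideanSpace ℝ (Fin n)))
    (b : EuclideanSpace ℝ (Fin m)) {β : ℝ} (hβ : 0 ≤ β) (x : EuclideanSpace ℝ (Fin n)) :
    IsStrongSubgradientOn (fun z => β / 2 * ‖A z - b‖ ^ 2) X (β * sigmaMin A ^ 2) x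
      (β • (A†) (A x - b)) := by
  intro y _
  have hy := penalty_add_smul A b β 1 x (y - x)
  rw [one_smul, add_sub_cancel, one_mul, one_pow, one_mul] at hy
  have := mul_le_mul_of_nonneg_left (sigmaMin_sq_mul_sq_norm_le A (y - x)) hβ
  dsimp only
  linarith

end Euclidean

section Penalty

variable {n m : ℕ} {A : EuclideanSpace ℝ (Fin n) →L[ℝ] EuclideanSpace ℝ (Fin m)}
  {b : EuclideanSpace ℝ (Fin m)} {f : EuclideanSpace ℝ (Fin n) → ℝ} {β : ℝ}
  {x p : EuclideanSpace ℝ (Fin n)}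

/-- Convexity of `f` lets the subgradient inequality be tested on short segments
`[x, x + t (y - x)]`, where the penalty is linear up to `O(t²)`. -/
theorem sub_smul_adjoint_mem_subdiff (hf : ConvexOn ℝ Set.univ f)
    (hp : p ∈ subdiff (fun z => f z + β / 2 * ‖A z - b‖ ^ 2) x) :
    p - β • (A†) (A x - b) ∈ subdiff f x := by
  intro y
  suffices ⟪p, y - x⟫ - ⟪β • (A†) (A x - b), y - x⟫ - (f y - f x) ≤ 0 by
    rw [inner_sub_left]; linarith
  refine nonpos_of_forall_le_mul (B := β / 2 * ‖A (y - x)‖ ^ 2) fun t ht ht1 => ?_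
  have hsub := hp (x + t • (y - x))
  simp only [add_sub_cancel_left, real_inner_smul_right] at hsub
  have hpen := penalty_add_smul A b β t x (y - x)
  have hconv : f (x + t • (y - x)) ≤ (1 - t) * f x + t * f y := by
    have hseg : x + t • (y - x) = (1 - t) • x + t • y := by module
    simpa only [hseg, smul_eq_mul] using
      hf.2 (Set.mem_univ x) (Set.mem_univ y) (sub_nonneg.mpr ht1) ht.le (by ring)
  have : t * (⟪p, y - x⟫ - ⟪β • (A†) (A x - b), y - x⟫ - (f y - f x))
      ≤ t * (t * (β / 2 * ‖A (y - x)‖ ^ 2)) := by linarith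
  exact le_of_mul_le_mul_left this ht

theorem isStrongSubgradientOn_penalized {X : Set (EuclideanSpace ℝ (Fin n))} {μ : ℝ}
    (hf : ConvexOn ℝ Set.univ f) (hβ : 0 ≤ β)
    (hsc : ∀ q ∈ subdiff f x, IsStrongSubgradientOn f X μ x q)
    (hp : p ∈ subdiff (fun z => f z + β / 2 * ‖A z - b‖ ^ 2) x) :
    IsStrongSubgradientOn (fun z => f z + β / 2 * ‖A z - b‖ ^ 2) X (μ + β * sigmaMin A ^ 2)
      x p := by
  simpa using (hsc _ (sub_smul_adjoint_mem_subdiff hf hp)).add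
    (isStrongSubgradientOn_penalty A X b hβ x)

theorem isStrongSubgradientOn_lagrangian {X : Set (EuclideanSpace ℝ (Fin n))} {μ : ℝ}
    (hf : ConvexOn ℝ Set.univ f) (hβ : 0 ≤ β)
    (hsc : ∀ q ∈ subdiff f x, IsStrongSubgradientOn f X μ x q)
    (hp : p ∈ subdiff (fun z => f z + β / 2 * ‖A z - b‖ ^ 2) x)
    {q : EuclideanSpace ℝ (Fin n)} (hq : q ∈ normalCone X x) (l : EuclideanSpace ℝ (Fin m)) :
    IsStrongSubgradientOn (fun z => f z + β / 2 * ‖A z - b‖ ^ 2 + ⟪l, A z - b⟫) X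
      (μ + β * sigmaMin A ^ 2) x (p + q + (A†) l) :=
  ((isStrongSubgradientOn_penalized hf hβ hsc hp).add_of_inner_nonpos hq.2).add_inner_sub A b l

end Penalty

section Lyapunov

variable {E F : Type*} [NormedAddCommGroup E] [InnerProductSpace ℝ E]
  [NormedAddCommGroup F] [InnerProductSpace ℝ F]

noncomputable def lyapunov (L : E → F → ℝ) (xs : E) (ls : F) (γ θ : ℝ) (x v : E) (l : F) : ℝ :=
  L x ls - L xs l + γ / 2 * ‖v - xs‖ ^ 2 + θ / 2 * ‖l - ls‖ ^ 2

theorem lyapunov_implicit_step_le {L : E → F → ℝ} {φ : E → ℝ} {A : E →L[ℝ] F} {b : F}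
    {X : Set E} {xs x x' v v' g : E} {ls l l' : F} {α θ γ μ : ℝ}
    (hL : ∀ z w, L z w = φ z + ⟪w, A z - b⟫) (hAxs : A xs = b) (hxs : xs ∈ X) (hx : x ∈ X)
    (hα : 0 < α) (hθ : 0 ≤ θ) (hγ : 0 ≤ γ) (hμ : 0 ≤ μ)
    (hg : IsStrongSubgradientOn (fun z => L z l') X μ x' g)
    (hdual : (θ / α) • (l' - l) = A v' - b)
    (hprim : α⁻¹ • (x' - x) = v' - x')
    (hvel : (γ / α) • (v' - v) = μ • (x' - v') - g) :
    (1 + α) * lyapunov L xs ls ((γ + μ * α) / (1 + α)) (θ / (1 + α)) x' v' l'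
      ≤ lyapunov L xs ls γ θ x v l := by
  have hv : α • (v' - x') = x' - x := by rw [← hprim, smul_inv_smul₀ hα.ne']
  have hdual_energy := implicit_step_energy_le hθ hα hdual ls
  have hvel_energy := implicit_step_energy_le hγ hα hvel xs
  have hAv : α * ⟪A v' - b, l' - ls⟫ = (1 + α) * (⟪l', A x' - b⟫ - ⟪ls, A x' - b⟫)
      - (⟪l', A x - b⟫ - ⟪ls, A x - b⟫) := by
    have hvec : α • (A v' - b) = (1 + α) • (A x' - b) - (A x - b) := by
      have := congrArg A hv
      rw [map_smul, map_sub, map_sub] at this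
      linear_combination (norm := module) this
    rw [← real_inner_smul_left, hvec, real_inner_comm]
    simp only [inner_sub_left, inner_sub_right, real_inner_smul_right]
    ring
  have hvg : α * ⟪μ • (x' - v') - g, v' - xs⟫
      = μ * α * ⟪x' - v', v' - xs⟫ + ⟪g, x - x'⟫ + α * ⟪g, xs - x'⟫ := by
    have hvec : α • (v' - xs) = -(x - x') - α • (xs - x') := by
      linear_combination (norm := module) hv
    rw [inner_sub_left, real_inner_smul_left, mul_sub, ← real_inner_smul_right _ _ α, hvec]
    simp only [inner_sub_right, inner_neg_right, real_inner_smul_right]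
    ring
  have hμterm : 2 * ⟪x' - v', v' - xs⟫ + ‖v' - xs‖ ^ 2 ≤ ‖xs - x'‖ ^ 2 := by
    have h := norm_add_sq_real (x' - v') (v' - xs)
    rw [sub_add_sub_cancel, norm_sub_rev] at h
    linarith [sq_nonneg ‖x' - v'‖]
  have hkey_x := hg x hx
  have hkey_s := hg xs hxs
  unfold lyapunov
  simp only [hL, hAxs, sub_self, inner_zero_right, add_zero] at hkey_x hkey_s ⊢
  have hscale : (1 + α) * (φ x' + ⟪ls, A x' - b⟫ - φ xs
      + (γ + μ * α) / (1 + α) / 2 * ‖v' - xs‖ ^ 2 + θ / (1 + α) / 2 * ‖l' - ls‖ ^ 2)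
      = (1 + α) * (φ x' + ⟪ls, A x' - b⟫ - φ xs) + (γ + μ * α) / 2 * ‖v' - xs‖ ^ 2
        + θ / 2 * ‖l' - ls‖ ^ 2 := by
    field_simp
  rw [hscale]
  linarith [mul_le_mul_of_nonneg_left hkey_s hα.le,
    mul_le_mul_of_nonneg_left hμterm (mul_nonneg hμ hα.le),
    mul_nonneg hμ (sq_nonneg ‖x - x'‖)]

end Lyapunov

theorem implicit_scheme_contraction_general {n m : ℕ}
    (X : Set (EuclideanSpace ℝ (Fin n)))
    (f : EuclideanSpace ℝ (Fin n) → ℝ)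
    (hfcv : ConvexOn ℝ Set.univ f)
    (A : EuclideanSpace ℝ (Fin n) →L[ℝ] EuclideanSpace ℝ (Fin m))
    (b : EuclideanSpace ℝ (Fin m))
    (μ β μβ : ℝ) (hμ : 0 ≤ μ) (hβ : 0 ≤ β)
    (hμβ : μβ = μ + β * sigmaMin A ^ 2)
    (hsc : ∀ x ∈ X, ∀ y ∈ X, ∀ p ∈ subdiff f x,
      f x + ⟪p, y - x⟫ + μ / 2 * ‖y - x‖ ^ 2 ≤ f y)
    (fβ : EuclideanSpace ℝ (Fin n) → ℝ)
    (hfβ : ∀ z, fβ z = f z + β / 2 * ‖A z - b‖ ^ 2)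
    (Lβ : EuclideanSpace ℝ (Fin n) → EuclideanSpace ℝ (Fin m) → ℝ)
    (hLβ : ∀ z w, Lβ z w = fβ z + ⟪w, A z - b⟫)
    (xs : EuclideanSpace ℝ (Fin n)) (ls : EuclideanSpace ℝ (Fin m))
    (hxs : xs ∈ X) (hKKT1 : A xs = b)
    (θ γ α : ℕ → ℝ)
    (hα : ∀ k, 0 < α k) (hθ0 : θ 0 = 1) (hγ0 : 0 < γ 0)
    (hθ : ∀ k, θ (k + 1) = θ k / (1 + α k))
    (hγ : ∀ k, γ (k + 1) = (γ k + μβ * α k) / (1 + α k))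
    (lam : ℕ → EuclideanSpace ℝ (Fin m))
    (x v : ℕ → EuclideanSpace ℝ (Fin n))
    (hx0 : x 0 ∈ X)
    (hdual : ∀ k, (θ k / α k) • (lam (k + 1) - lam k) = A (v (k + 1)) - b)
    (hprim : ∀ k, (α k)⁻¹ • (x (k + 1) - x k) = v (k + 1) - x (k + 1))
    (hvup : ∀ k, ∃ ξ ∈ subdiff fβ (x (k + 1)) + normalCone X (x (k + 1)),
      (γ k / α k) • (v (k + 1) - v k) =
        μβ • (x (k + 1) - v (k + 1)) -
          (ξ + (ContinuousLinearMap.adjoint A) (lam (k + 1))))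
    (Ef : ℕ → ℝ)
    (hEf : ∀ k, Ef k = Lβ (x k) ls - Lβ xs (lam k)
      + γ k / 2 * ‖v k - xs‖ ^ 2 + θ k / 2 * ‖lam k - ls‖ ^ 2) :
    (∀ k, x k ∈ X) ∧ ∀ k, Ef (k + 1) - Ef k ≤ -(α k * Ef (k + 1)) := by
  have hμβ_nonneg : 0 ≤ μβ := hμβ ▸ add_nonneg hμ (mul_nonneg hβ (sq_nonneg _))
  have hxX : ∀ k, x k ∈ X
    | 0 => hx0
    | k + 1 => by
      obtain ⟨_, ⟨_, _, _, hq, _⟩, _⟩ := hvup k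
      exact hq.1
  have hθ_nonneg (k : ℕ) : 0 ≤ θ k := by
    induction k with
    | zero => exact hθ0 ▸ zero_le_one
    | succ k ih => exact hθ k ▸ div_nonneg ih (by linarith [hα k])
  have hγ_nonneg (k : ℕ) : 0 ≤ γ k := by
    induction k with
    | zero => exact hγ0.le
    | succ k ih =>
      exact hγ k ▸ div_nonneg (add_nonneg ih (mul_nonneg hμβ_nonneg (hα k).le))
        (by linarith [hα k])
  refine ⟨hxX, fun k => ?_⟩
  obtain ⟨_, ⟨p, hp, q, hq, rfl⟩, hvel⟩ := hvup k
  rw [show fβ = _ from funext hfβ] at hp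
  have hg : IsStrongSubgradientOn (fun z => Lβ z (lam (k + 1))) X μβ (x (k + 1))
      (p + q + (A†) (lam (k + 1))) := by
    simp only [hLβ, hfβ, hμβ]
    exact isStrongSubgradientOn_lagrangian hfcv hβ (fun r hr y hy => hsc _ hq.1 y hy r hr) hp hq _
  have hE (j : ℕ) : Ef j = lyapunov Lβ xs ls (γ j) (θ j) (x j) (v j) (lam j) := hEf j
  rw [hE, hE, hθ k, hγ k]
  linarith [lyapunov_implicit_step_le (ls := ls) hLβ hKKT1 hxs (hxX k) (hα k) (hθ_nonneg k)
    (hγ_nonneg k) hμβ_nonneg hg (hdual k) (hprim k) hvel]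

/-- Theorem 3.1 (contraction part): the fully implicit scheme keeps the iterates in `X`
and the discrete Lyapunov function contracts unconditionally. -/
theorem implicit_scheme_contraction {n m : ℕ}
    (X : Set (EuclideanSpace ℝ (Fin n)))
    (hXne : X.Nonempty) (hXcl : IsClosed X) (hXcv : Convex ℝ X)
    (f : EuclideanSpace ℝ (Fin n) → ℝ)
    (hfcv : ConvexOn ℝ Set.univ f)
    (A : EuclideanSpace ℝ (Fin n) →L[ℝ] EuclideanSpace ℝ (Fin m))
    (b : EuclideanSpace ℝ (Fin m))
    (μ β μβ : ℝ) (hμ : 0 ≤ μ) (hβ : 0 ≤ β)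
    (hμβ : μβ = μ + β * sigmaMin A ^ 2)
    (hsc : ∀ x ∈ X, ∀ y ∈ X, ∀ p ∈ subdiff f x,
      f x + ⟪p, y - x⟫ + μ / 2 * ‖y - x‖ ^ 2 ≤ f y)
    (fβ : EuclideanSpace ℝ (Fin n) → ℝ)
    (hfβ : ∀ z, fβ z = f z + β / 2 * ‖A z - b‖ ^ 2)
    (Lβ : EuclideanSpace ℝ (Fin n) → EuclideanSpace ℝ (Fin m) → ℝ)
    (hLβ : ∀ z w, Lβ z w = fβ z + ⟪w, A z - b⟫)
    (xs : EuclideanSpace ℝ (Fin n)) (ls : EuclideanSpace ℝ (Fin m))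
    (hxs : xs ∈ X) (hKKT1 : A xs = b)
    (hKKT2 : ∃ p ∈ subdiff f xs, ∃ q ∈ normalCone X xs,
      p + q + (ContinuousLinearMap.adjoint A) ls = 0)
    (θ γ α : ℕ → ℝ)
    (hα : ∀ k, 0 < α k) (hθ0 : θ 0 = 1) (hγ0 : 0 < γ 0)
    (hθ : ∀ k, θ (k + 1) = θ k / (1 + α k))
    (hγ : ∀ k, γ (k + 1) = (γ k + μβ * α k) / (1 + α k))
    (lam : ℕ → EuclideanSpace ℝ (Fin m))
    (x v : ℕ → EuclideanSpace ℝ (Fin n))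
    (hx0 : x 0 ∈ X)
    (hdual : ∀ k, (θ k / α k) • (lam (k + 1) - lam k) = A (v (k + 1)) - b)
    (hprim : ∀ k, (α k)⁻¹ • (x (k + 1) - x k) = v (k + 1) - x (k + 1))
    (hvup : ∀ k, ∃ ξ ∈ subdiff fβ (x (k + 1)) + normalCone X (x (k + 1)),
      (γ k / α k) • (v (k + 1) - v k) =
        μβ • (x (k + 1) - v (k + 1)) -
          (ξ + (ContinuousLinearMap.adjoint A) (lam (k + 1))))
    (Ef : ℕ → ℝ)
    (hEf : ∀ k, Ef k = Lβ (x k) ls - Lβ xs (lam k)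
      + γ k / 2 * ‖v k - xs‖ ^ 2 + θ k / 2 * ‖lam k - ls‖ ^ 2) :
    (∀ k, x k ∈ X) ∧ ∀ k, Ef (k + 1) - Ef k ≤ -(α k * Ef (k + 1)) :=
  implicit_scheme_contraction_general X f hfcv A b μ β μβ hμ hβ hμβ hsc fβ hfβ Lβ hLβ xs ls hxs
    hKKT1 θ γ α hα hθ0 hγ0 hθ hγ lam x v hx0 hdual hprim hvup Ef hEf
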